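/- Let P, Q : ℤ → ℝ with P(n) ≠ 0 for all n, and set P̂(n) = 1/P(n), Q̂(n) = Q(n+1)/(P(n)P(n+1)). Then for every pair ξ = (ξ₁, ξ₂) of functions ℤ → ℝ one has (𝒥 ∘ 𝒫₂ ∘ 𝒥*)(ξ) = 𝒫̂₂(ξ), where 𝒫̂₂ is the operator 𝒫₂ with P replaced by P̂, Q replaced by Q̂, and the shift Λ replaced by Λ⁻¹ (equivalently, all superscripts + and − interchanged): 𝒫̂₂(ξ) = ( P̂((Q̂ξ₂)⁻ − Q̂ξ₂), Q̂(P̂ξ₁ − (P̂ξ₁)⁺) + Q̂((Q̂ξ₂)⁻ − (Q̂ξ₂)⁺) ). -/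

import Mathlib

/-- The shift by `e`: `(shiftE e f) n = f (n + e)`; `shiftE 1 = Λ`, `shiftE (-1) = Λ⁻¹`. -/
def shiftE (e : ℤ) (f : ℤ → ℝ) : ℤ → ℝ := fun n => f (n + e)

/-- The second Hamiltonian operator of the Ablowitz–Ladik hierarchy, with the shift `Λ`
replaced by `Λᵉ` (so `e = 1` gives `𝒫₂` and `e = -1` gives `𝒫₂` with all the
superscripts `+` and `−` interchanged):
`𝒫₂(ξ) = ( P((Qξ₂)⁺ − Qξ₂) , Q(Pξ₁ − (Pξ₁)⁻) + Q((Qξ₂)⁺ − (Qξ₂)⁻) )`. -/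
def P2gen (e : ℤ) (P Q : ℤ → ℝ) (ξ : (ℤ → ℝ) × (ℤ → ℝ)) : (ℤ → ℝ) × (ℤ → ℝ) :=
  (P * (shiftE e (Q * ξ.2) - Q * ξ.2),
   Q * (P * ξ.1 - shiftE (-e) (P * ξ.1))
     + Q * (shiftE e (Q * ξ.2) - shiftE (-e) (Q * ξ.2)))

/-- The gauge operator
`𝒥(ξ) = ( −ξ₁/P², −(Q⁺/(P²P⁺))ξ₁ − (Q⁺/(P(P⁺)²))ξ₁⁺ + ξ₂⁺/(PP⁺) )`. -/
noncomputable def Jgauge (P Q : ℤ → ℝ) (ξ : (ℤ → ℝ) × (ℤ → ℝ)) : (ℤ → ℝ) × (ℤ → ℝ) :=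
  (fun n => -ξ.1 n / P n ^ 2,
   fun n => -(Q (n + 1) / (P n ^ 2 * P (n + 1))) * ξ.1 n
     - (Q (n + 1) / (P n * P (n + 1) ^ 2)) * ξ.1 (n + 1)
     + ξ.2 (n + 1) / (P n * P (n + 1)))

/-- The gauge operator
`𝒥*(ξ) = ( −ξ₁/P² − (Q⁺/(P²P⁺))ξ₂ − (Q/(P²P⁻))ξ₂⁻, ξ₂⁻/(PP⁻) )`. -/
noncomputable def JgaugeStar (P Q : ℤ → ℝ) (ξ : (ℤ → ℝ) × (ℤ → ℝ)) : (ℤ → ℝ) × (ℤ → ℝ) :=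
  (fun n => -ξ.1 n / P n ^ 2 - (Q (n + 1) / (P n ^ 2 * P (n + 1))) * ξ.2 n
     - (Q n / (P n ^ 2 * P (n - 1))) * ξ.2 (n - 1),
   fun n => ξ.2 (n - 1) / (P n * P (n - 1)))

/-! The gauge transformation is best read in the variables `P̂ = 1/P` and
`Q̂ = Q⁺/(PP⁺) = P̂ P̂⁺ Q⁺`. Writing `u = Q̂ ξ₂`, the operator `𝒥*` gives
`P (𝒥*ξ)₁ = −(P̂ξ₁ + u + u⁻)` and `Q (𝒥*ξ)₂ = u⁻`. Feeding this into `𝒫₂`, the `u`-terms of the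
second component telescope away, leaving `𝒫₂(𝒥*ξ) = (P(u − u⁻), Q((P̂ξ₁)⁻ − P̂ξ₁))`; and `𝒥`,
rewritten as `(−P̂²ζ₁, −Q̂P̂ζ₁ − Q̂P̂⁺ζ₁⁺ + P̂P̂⁺ζ₂⁺)`, turns this into `𝒫̂₂ ξ` because `P̂P = 1`. -/

noncomputable def Phat (P : ℤ → ℝ) : ℤ → ℝ := fun n => 1 / P n

noncomputable def Qhat (P Q : ℤ → ℝ) : ℤ → ℝ := fun n => Q (n + 1) / (P n * P (n + 1))

section Gauge

variable {P Q : ℤ → ℝ}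

theorem Phat_mul_self {n : ℤ} (hP : P n ≠ 0) : Phat P n * P n = 1 :=
  one_div_mul_cancel hP

theorem Qhat_eq_Phat_mul (n : ℤ) : Qhat P Q n = Phat P n * Phat P (n + 1) * Q (n + 1) := by
  simp only [Qhat, Phat, div_eq_mul_inv, mul_inv]
  ring

theorem P2gen_fst_apply (e : ℤ) (ξ : (ℤ → ℝ) × (ℤ → ℝ)) (n : ℤ) :
    (P2gen e P Q ξ).1 n = P n * (Q (n + e) * ξ.2 (n + e) - Q n * ξ.2 n) :=
  rfl

theorem P2gen_snd_apply (e : ℤ) (ξ : (ℤ → ℝ) × (ℤ → ℝ)) (n : ℤ) :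
    (P2gen e P Q ξ).2 n =
      Q n * (P n * ξ.1 n - P (n + -e) * ξ.1 (n + -e))
        + Q n * (Q (n + e) * ξ.2 (n + e) - Q (n + -e) * ξ.2 (n + -e)) :=
  rfl

theorem Jgauge_fst_apply (ζ : (ℤ → ℝ) × (ℤ → ℝ)) (n : ℤ) :
    (Jgauge P Q ζ).1 n = -(Phat P n ^ 2 * ζ.1 n) := by
  simp only [Jgauge, Phat, div_eq_mul_inv]
  ring

theorem Jgauge_snd_apply (ζ : (ℤ → ℝ) × (ℤ → ℝ)) (n : ℤ) :
    (Jgauge P Q ζ).2 n =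
      -(Qhat P Q n * Phat P n * ζ.1 n) - Qhat P Q n * Phat P (n + 1) * ζ.1 (n + 1)
        + Phat P n * Phat P (n + 1) * ζ.2 (n + 1) := by
  simp only [Jgauge, Qhat, Phat, div_eq_mul_inv, mul_inv]
  ring

theorem mul_JgaugeStar_fst {n : ℤ} (hP : P n ≠ 0) (ξ : (ℤ → ℝ) × (ℤ → ℝ)) :
    P n * (JgaugeStar P Q ξ).1 n =
      -(Phat P n * ξ.1 n + Qhat P Q n * ξ.2 n + Qhat P Q (n - 1) * ξ.2 (n - 1)) := by
  simp only [JgaugeStar, Phat, Qhat, sub_add_cancel]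
  field_simp
  ring

theorem mul_JgaugeStar_snd (ξ : (ℤ → ℝ) × (ℤ → ℝ)) (n : ℤ) :
    Q n * (JgaugeStar P Q ξ).2 n = Qhat P Q (n - 1) * ξ.2 (n - 1) := by
  simp only [JgaugeStar, Qhat, sub_add_cancel, div_eq_mul_inv]
  ring

theorem P2gen_JgaugeStar_fst (ξ : (ℤ → ℝ) × (ℤ → ℝ)) (n : ℤ) :
    (P2gen 1 P Q (JgaugeStar P Q ξ)).1 n =
      P n * (Qhat P Q n * ξ.2 n - Qhat P Q (n - 1) * ξ.2 (n - 1)) := by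
  rw [P2gen_fst_apply, mul_JgaugeStar_snd, mul_JgaugeStar_snd, add_sub_cancel_right]

theorem P2gen_JgaugeStar_snd (hP : ∀ n, P n ≠ 0) (ξ : (ℤ → ℝ) × (ℤ → ℝ)) (n : ℤ) :
    (P2gen 1 P Q (JgaugeStar P Q ξ)).2 n =
      Q n * (Phat P (n - 1) * ξ.1 (n - 1) - Phat P n * ξ.1 n) := by
  rw [P2gen_snd_apply, ← sub_eq_add_neg, mul_JgaugeStar_fst (hP n), mul_JgaugeStar_fst (hP _),
    mul_JgaugeStar_snd, mul_JgaugeStar_snd, add_sub_cancel_right]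
  ring

end Gauge

theorem gauge_P2_eq_P2hat (P Q : ℤ → ℝ) (hP : ∀ n : ℤ, P n ≠ 0) :
    ∀ ξ : (ℤ → ℝ) × (ℤ → ℝ),
      (Jgauge P Q ∘ P2gen 1 P Q ∘ JgaugeStar P Q) ξ =
        P2gen (-1) (fun n => 1 / P n) (fun n => Q (n + 1) / (P n * P (n + 1))) ξ := by
  intro ξ
  change Jgauge P Q (P2gen 1 P Q (JgaugeStar P Q ξ)) = P2gen (-1) (Phat P) (Qhat P Q) ξ
  ext n
  · rw [Jgauge_fst_apply, P2gen_JgaugeStar_fst, P2gen_fst_apply, ← sub_eq_add_neg]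
    linear_combination -(Phat P n * (Qhat P Q n * ξ.2 n - Qhat P Q (n - 1) * ξ.2 (n - 1)))
      * Phat_mul_self (hP n)
  · rw [Jgauge_snd_apply, P2gen_JgaugeStar_fst, P2gen_JgaugeStar_fst, P2gen_JgaugeStar_snd hP,
      P2gen_snd_apply, neg_neg, ← sub_eq_add_neg, add_sub_cancel_right]
    linear_combination
      -(Phat P n * ξ.1 n - Phat P (n + 1) * ξ.1 (n + 1)) * Qhat_eq_Phat_mul (Q := Q) n
        - Qhat P Q n * (Qhat P Q n * ξ.2 n - Qhat P Q (n - 1) * ξ.2 (n - 1))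
          * Phat_mul_self (hP n)
        - Qhat P Q n * (Qhat P Q (n + 1) * ξ.2 (n + 1) - Qhat P Q n * ξ.2 n)
          * Phat_mul_self (hP (n + 1))
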